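/- arXiv:1210.3236 — 2 statements merged into one kernel-verified Lean document; each statement's English description precedes it below -/
import Mathlib

section
/- If in addition s ≠ −r, then the minimal polynomial of the Benkart–Witherspoon R-matrix R (viewed as a ℂ-linear endomorphism of V ⊗ V) is (t − 1)(t + r s⁻¹). -/
open Matrix Kronecker BigOperators

/-- The `n × n` matrix unit `E i j` over `ℂ`. -/
noncomputable def E (n : ℕ) (i j : Fin n) : Matrix (Fin n) (Fin n) ℂ :=
  Matrix.single i j 1

/-- The Benkart–Witherspoon R-matrix on `V ⊗ V`. -/
noncomputable def BWR (n : ℕ) (r s : ℂ) : Matrix (Fin n × Fin n) (Fin n × Fin n) ℂ :=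
  (∑ i : Fin n, E n i i ⊗ₖ E n i i)
  + r • (∑ i : Fin n, ∑ j : Fin n, if i < j then E n j i ⊗ₖ E n i j else 0)
  + s⁻¹ • (∑ i : Fin n, ∑ j : Fin n, if i < j then E n i j ⊗ₖ E n j i else 0)
  + (1 - r * s⁻¹) • (∑ i : Fin n, ∑ j : Fin n, if i < j then E n j j ⊗ₖ E n i i else 0)

/-!
On each line `ℂ (v_i ⊗ v_i)` the matrix `R` acts as `1`, and for `i < j` it preserves the plane
spanned by `v_i ⊗ v_j` and `v_j ⊗ v_i`, acting there by `[[0, s⁻¹], [r, 1 - r s⁻¹]]`, whose trace is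
`1 - r s⁻¹` and whose determinant is `-r s⁻¹`. Hence `R` satisfies the Hecke relation
`(R - 1)(R + r s⁻¹) = 0`. Since `R` has diagonal entries `1` at `v_i ⊗ v_i` and `0` at `v_i ⊗ v_j`
(`i < j`), it is not a scalar, so its minimal polynomial has degree two.
-/

theorem sum_sum_ite_lt_ite_eq {ι M : Type*} [Fintype ι] [DecidableEq ι] [LT ι] [DecidableLT ι]
    [AddCommMonoid M] (f : ι → ι → M) (a b : ι) :
    (∑ x, ∑ y, if x < y then if x = a ∧ y = b then f x y else 0 else 0) =
      if a < b then f a b else 0 := by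
  rw [Fintype.sum_eq_single a, Fintype.sum_eq_single b] <;> aesop

theorem sum_sum_ite_lt_ite_eq_swap {ι M : Type*} [Fintype ι] [DecidableEq ι] [LT ι]
    [DecidableLT ι] [AddCommMonoid M] (f : ι → ι → M) (a b : ι) :
    (∑ x, ∑ y, if x < y then if y = a ∧ x = b then f x y else 0 else 0) =
      if b < a then f b a else 0 := by
  rw [Fintype.sum_eq_single b, Fintype.sum_eq_single a] <;> aesop

open Polynomial in
theorem minpoly_eq_of_natDegree_eq_two {K A : Type*} [Field K] [Ring A] [Algebra K A] {x : A}
    (hx : IsIntegral K x) (hx' : x ∉ (algebraMap K A).range) {p : K[X]} (hp : p.Monic)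
    (hdeg : p.natDegree = 2) (hpx : aeval x p = 0) : minpoly K x = p := by
  obtain hA | hA := subsingleton_or_nontrivial A
  · exact absurd ⟨0, Subsingleton.elim _ _⟩ hx'
  exact (eq_of_monic_of_dvd_of_natDegree_le (minpoly.monic hx) hp (minpoly.dvd K x hpx)
    (hdeg ▸ (minpoly.two_le_natDegree_iff hx).mpr hx')).symm

section

variable (n : ℕ) (r s : ℂ)

theorem BWR_mulVec_single (k l : Fin n) :
    BWR n r s *ᵥ Pi.single (k, l) 1 =
      (if k = l then Pi.single (k, l) 1 else 0) + (if k < l then r • Pi.single (l, k) 1 else 0)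
      + (if l < k then s⁻¹ • Pi.single (l, k) 1 else 0)
      + (if l < k then (1 - r * s⁻¹) • Pi.single (k, l) 1 else 0) := by
  simp only [BWR, E, single_kronecker_single, add_mulVec, smul_mulVec, sum_mulVec,
    single_mulVec_eq, apply_ite (· *ᵥ Pi.single (k, l) (1 : ℂ)), zero_mulVec]
  simp [Pi.single_apply, Prod.ext_iff, sum_sum_ite_lt_ite_eq, sum_sum_ite_lt_ite_eq_swap]
  rw [Fintype.sum_eq_single k] <;> aesop

theorem BWR_mulVec_single_self (k : Fin n) :
    BWR n r s *ᵥ Pi.single (k, k) 1 = Pi.single (k, k) 1 := by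
  rw [BWR_mulVec_single]
  simp

theorem BWR_mulVec_single_of_lt {k l : Fin n} (h : k < l) :
    BWR n r s *ᵥ Pi.single (k, l) 1 = r • Pi.single (l, k) 1 := by
  rw [BWR_mulVec_single]
  simp [h, h.ne, h.not_gt]

theorem BWR_mulVec_single_of_gt {k l : Fin n} (h : l < k) :
    BWR n r s *ᵥ Pi.single (k, l) 1 =
      s⁻¹ • Pi.single (l, k) 1 + (1 - r * s⁻¹) • Pi.single (k, l) 1 := by
  rw [BWR_mulVec_single]
  simp [h, h.ne', h.not_gt]

theorem BWR_hecke : (BWR n r s - 1) * (BWR n r s + (r * s⁻¹) • 1) = 0 := by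
  refine ext_of_mulVec_single fun ⟨k, l⟩ => ?_
  rw [← mulVec_mulVec, zero_mulVec, add_mulVec, smul_mulVec, one_mulVec]
  rcases lt_trichotomy k l with hkl | rfl | hkl
  · simp only [BWR_mulVec_single_of_lt _ _ _ hkl, BWR_mulVec_single_of_gt _ _ _ hkl,
      mulVec_add, mulVec_smul, sub_mulVec, one_mulVec]
    module
  · simp only [BWR_mulVec_single_self, mulVec_add, mulVec_smul, sub_mulVec, one_mulVec]
    module
  · simp only [BWR_mulVec_single_of_gt _ _ _ hkl, BWR_mulVec_single_of_lt _ _ _ hkl,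
      mulVec_add, mulVec_smul, sub_mulVec, one_mulVec]
    module

theorem BWR_not_mem_range_algebraMap (hn : 2 ≤ n) :
    BWR n r s ∉ (algebraMap ℂ (Matrix (Fin n × Fin n) (Fin n × Fin n) ℂ)).range := by
  rintro ⟨μ, hμ⟩
  let a : Fin n := ⟨0, by omega⟩
  let b : Fin n := ⟨1, by omega⟩
  have hab : a < b := Fin.mk_lt_mk.mpr zero_lt_one
  have h₀ : BWR n r s (a, b) (a, b) = 0 := by
    simpa [hab.ne'] using congrFun (BWR_mulVec_single_of_lt n r s hab) (a, b)
  have h₁ : BWR n r s (a, a) (a, a) = 1 := by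
    simpa using congrFun (BWR_mulVec_single_self n r s a) (a, a)
  rw [← hμ, algebraMap_eq_diagonal, diagonal_apply_eq] at h₀ h₁
  exact zero_ne_one (h₀.symm.trans h₁)

end

open Polynomial in
theorem stmt3_general (n : ℕ) (hn : 2 ≤ n) (r s : ℂ) :
    minpoly ℂ (BWR n r s) = (X - 1) * (X + C (r * s⁻¹)) := by
  have hmonic : ((X - 1) * (X + C (r * s⁻¹)) : ℂ[X]).Monic := by
    simpa using (monic_X_sub_C 1).mul (monic_X_add_C (r * s⁻¹))
  refine minpoly_eq_of_natDegree_eq_two (.of_finite ℂ _) (BWR_not_mem_range_algebraMap n r s hn)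
    hmonic (by compute_degree!) ?_
  rw [map_mul, map_sub, map_add, aeval_X, aeval_C, map_one, Algebra.algebraMap_eq_smul_one]
  exact BWR_hecke n r s

open Polynomial in
/-- If `s ≠ -r`, the minimal polynomial of the Benkart–Witherspoon R-matrix is
`(t − 1)(t + r s⁻¹)`. -/
theorem stmt3 (n : ℕ) (hn : 2 ≤ n) (r s : ℂ) (hr : r ≠ 0) (hs : s ≠ 0) (hrs : r ≠ s) (hsr : s ≠ -r) :
    minpoly ℂ (BWR n r s) = (X - 1) * (X + C (r * s⁻¹)) :=
  stmt3_general n hn r s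
end

section
/- The kernel of the linear map R(r⁻¹ s) on V ⊗ V equals the subspace S²_{r,s}(V). -/
/-!
At `z = r⁻¹ s` the diagonal coefficient `1 - z r s⁻¹` of `R(z)` vanishes, so `R(r⁻¹ s)` kills every
`v_i ⊗ v_i`. On the plane spanned by `v_i ⊗ v_j` and `v_j ⊗ v_i` (`i < j`) it acts by a matrix
whose two rows are nonzero multiples (`r ≠ s`) of the functional `x_{ji} - s x_{ij}`. Hence the
kernel is the space of tensors with `x_{ji} = s x_{ij}` for all `i < j`, and so is `S²_{r,s}(V)`,
as its generators span exactly this space.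
-/

open Matrix Kronecker BigOperators

/-- The spectral-parameter R-matrix `R(z)`. -/
noncomputable def Rz (n : ℕ) (r s z : ℂ) : Matrix (Fin n × Fin n) (Fin n × Fin n) ℂ :=
  (1 - z * (r * s⁻¹)) • (∑ i : Fin n, E n i i ⊗ₖ E n i i)
  + (1 - z) • (r • (∑ i : Fin n, ∑ j : Fin n, if j < i then E n i j ⊗ₖ E n j i else 0)
      + s⁻¹ • (∑ i : Fin n, ∑ j : Fin n, if i < j then E n i j ⊗ₖ E n j i else 0))
  + (z * (1 - r * s⁻¹)) • (∑ i : Fin n, ∑ j : Fin n, if i < j then E n i i ⊗ₖ E n j j else 0)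
  + (1 - r * s⁻¹) • (∑ i : Fin n, ∑ j : Fin n, if j < i then E n i i ⊗ₖ E n j j else 0)

/-- The `(r,s)`-symmetric square `S²_{r,s}(V) ⊆ V ⊗ V`, with `V ⊗ V` modelled as
`Fin n × Fin n → ℂ` and `v_i ⊗ v_j = Pi.single (i, j) 1`. -/
noncomputable def Ssub (n : ℕ) (s : ℂ) : Submodule ℂ (Fin n × Fin n → ℂ) :=
  Submodule.span ℂ ({ f | ∃ i : Fin n, f = (Pi.single (i, i) 1 : Fin n × Fin n → ℂ) } ∪
    { f | ∃ i j : Fin n, i < j ∧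
      f = (Pi.single (i, j) 1 : Fin n × Fin n → ℂ) + s • (Pi.single (j, i) 1 : Fin n × Fin n → ℂ) })

section RMatrix

variable {n : ℕ} {r s : ℂ} (v : Fin n × Fin n → ℂ)

lemma E_kronecker_E (i j k l : Fin n) : E n i j ⊗ₖ E n k l = single (i, k) (j, l) 1 := by
  rw [E, E, single_kronecker_single, mul_one]

lemma Rz_mulVec_apply (z : ℂ) (a b : Fin n) :
    (Rz n r s z *ᵥ v) (a, b) =
      (1 - z * (r * s⁻¹)) * (if a = b then v (a, a) else 0)
      + (1 - z) * (r * (if b < a then v (b, a) else 0) + s⁻¹ * (if a < b then v (b, a) else 0))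
      + z * (1 - r * s⁻¹) * (if a < b then v (a, b) else 0)
      + (1 - r * s⁻¹) * (if b < a then v (a, b) else 0) := by
  simp only [Rz, add_mulVec, smul_mulVec, sum_mulVec, E_kronecker_E, apply_ite (· *ᵥ v),
    single_mulVec, zero_mulVec, Finset.sum_apply, Pi.add_apply, Pi.smul_apply, smul_eq_mul,
    apply_ite (fun f : Fin n × Fin n → ℂ => f (a, b)), Function.update_apply, Pi.zero_apply,
    Prod.mk.injEq, one_mul, ← ite_and]
  simp [and_comm, ite_and, Finset.sum_ite_eq, eq_comm]

lemma Rz_inv_mul_mulVec_apply_self (hr : r ≠ 0) (hs : s ≠ 0) (a : Fin n) :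
    (Rz n r s (r⁻¹ * s) *ᵥ v) (a, a) = 0 := by
  have hz : r⁻¹ * s * (r * s⁻¹) = 1 := by field_simp
  simp [Rz_mulVec_apply, hz]

lemma Rz_inv_mul_mulVec_apply_of_lt (hr : r ≠ 0) (hs : s ≠ 0) {a b : Fin n} (hab : a < b) :
    (Rz n r s (r⁻¹ * s) *ᵥ v) (a, b) = (1 - r⁻¹ * s) * (s⁻¹ * v (b, a) - v (a, b)) := by
  simp only [Rz_mulVec_apply, hab, hab.ne, hab.not_gt, if_true, if_false]
  field_simp
  ring

lemma Rz_inv_mul_mulVec_apply_of_gt (hr : r ≠ 0) (hs : s ≠ 0) {a b : Fin n} (hab : b < a) :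
    (Rz n r s (r⁻¹ * s) *ᵥ v) (a, b) = (r - s) * (v (b, a) - s⁻¹ * v (a, b)) := by
  simp only [Rz_mulVec_apply, hab, hab.ne', hab.not_gt, if_true, if_false]
  field_simp
  ring

end RMatrix

def twistedSymm (n : ℕ) (s : ℂ) : Submodule ℂ (Fin n × Fin n → ℂ) where
  carrier := {v | ∀ i j, i < j → v (j, i) = s * v (i, j)}
  add_mem' {v w} hv hw i j hij := by simp [hv i j hij, hw i j hij, mul_add]
  zero_mem' := by simp
  smul_mem' c v hv i j hij := by simp [hv i j hij, mul_left_comm]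

section TwistedSymm

variable {n : ℕ} {s : ℂ}

lemma mem_twistedSymm {v : Fin n × Fin n → ℂ} :
    v ∈ twistedSymm n s ↔ ∀ i j, i < j → v (j, i) = s * v (i, j) := Iff.rfl

lemma single_diag_mem_twistedSymm (k : Fin n) :
    (Pi.single (k, k) 1 : Fin n × Fin n → ℂ) ∈ twistedSymm n s := by
  intro i j hij
  rcases eq_or_ne i k with rfl | hik
  · simp [hij.ne']
  · simp [hik]

lemma single_add_smul_single_mem_twistedSymm {k l : Fin n} (hkl : k < l) :
    (Pi.single (k, l) 1 + s • Pi.single (l, k) 1 : Fin n × Fin n → ℂ) ∈ twistedSymm n s := by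
  intro i j hij
  have hji : (j, i) ≠ (k, l) := by
    rintro ⟨⟩
    exact (hij.trans hkl).false
  by_cases hij' : (i, j) = (k, l)
  · cases hij'
    simp [hij.ne, hij.ne']
  · have hij'' : (i, j) ≠ (l, k) := fun h => hji (congrArg Prod.swap h)
    have hji' : (j, i) ≠ (l, k) := fun h => hij' (congrArg Prod.swap h)
    simp [Pi.single_eq_of_ne, hji, hij', hij'', hji']

lemma sum_smul_single_diag_apply (c : Fin n → ℂ) (a b : Fin n) :
    (∑ i, c i • Pi.single (i, i) 1 : Fin n × Fin n → ℂ) (a, b) = if a = b then c a else 0 := by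
  simp [Pi.single_apply, ite_and, Finset.sum_ite_eq, eq_comm]

lemma sum_smul_single_add_smul_single_apply (c : Fin n → Fin n → ℂ) (a b : Fin n) :
    (∑ i, ∑ j, if i < j then c i j • (Pi.single (i, j) 1 + s • Pi.single (j, i) 1) else 0 :
      Fin n × Fin n → ℂ) (a, b) = (if a < b then c a b else 0) + (if b < a then s * c b a else 0) := by
  simp only [smul_add, ite_add_zero, Finset.sum_add_distrib, Finset.sum_apply, Pi.add_apply,
    apply_ite (fun f : Fin n × Fin n → ℂ => f (a, b)), Pi.smul_apply, smul_eq_mul,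
    Pi.single_apply, Prod.mk.injEq, mul_ite, mul_one, mul_zero, Pi.zero_apply, ← ite_and]
  simp [and_comm, ite_and, Finset.sum_ite_eq, mul_comm]

lemma eq_sum_of_mem_twistedSymm {v : Fin n × Fin n → ℂ} (hv : v ∈ twistedSymm n s) :
    v = ∑ i, v (i, i) • Pi.single (i, i) 1
      + ∑ i, ∑ j, if i < j then v (i, j) • (Pi.single (i, j) 1 + s • Pi.single (j, i) 1) else 0 := by
  ext ⟨a, b⟩
  rw [Pi.add_apply, sum_smul_single_diag_apply, sum_smul_single_add_smul_single_apply]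
  rcases lt_trichotomy a b with hab | rfl | hab
  · simp [hab.ne, hab.not_gt, hab]
  · simp
  · simp [hab.ne', hab.not_gt, hab, hv b a hab]

theorem Ssub_eq_twistedSymm : Ssub n s = twistedSymm n s := by
  apply le_antisymm
  · rw [Ssub, Submodule.span_le]
    rintro f (⟨k, rfl⟩ | ⟨k, l, hkl, rfl⟩)
    · exact single_diag_mem_twistedSymm k
    · exact single_add_smul_single_mem_twistedSymm hkl
  · intro v hv
    rw [eq_sum_of_mem_twistedSymm hv]
    refine add_mem (Submodule.sum_mem _ fun i _ => Submodule.smul_mem _ _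
      (Submodule.subset_span (Or.inl ⟨i, rfl⟩))) (Submodule.sum_mem _ fun i _ =>
        Submodule.sum_mem _ fun j _ => ?_)
    split_ifs with hij
    · exact Submodule.smul_mem _ _ (Submodule.subset_span (Or.inr ⟨i, j, hij, rfl⟩))
    · exact zero_mem _

end TwistedSymm

theorem ker_Rz_inv_mul_eq_twistedSymm {n : ℕ} {r s : ℂ} (hr : r ≠ 0) (hs : s ≠ 0) (hrs : r ≠ s) :
    LinearMap.ker (Rz n r s (r⁻¹ * s)).mulVecLin = twistedSymm n s := by
  have hz : 1 - r⁻¹ * s ≠ 0 := by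
    rw [sub_ne_zero, ne_eq, eq_comm, inv_mul_eq_one₀ hr]
    exact hrs
  ext v
  rw [LinearMap.mem_ker, mulVecLin_apply, mem_twistedSymm]
  constructor
  · intro h i j hij
    have hentry := congrFun h (i, j)
    rwa [Rz_inv_mul_mulVec_apply_of_lt v hr hs hij, Pi.zero_apply, mul_eq_zero,
      or_iff_right hz, sub_eq_zero, inv_mul_eq_iff_eq_mul₀ hs] at hentry
  · intro h
    ext ⟨a, b⟩
    rcases lt_trichotomy a b with hab | rfl | hab
    · simp [Rz_inv_mul_mulVec_apply_of_lt v hr hs hab, h a b hab, hs]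
    · exact Rz_inv_mul_mulVec_apply_self v hr hs a
    · simp [Rz_inv_mul_mulVec_apply_of_gt v hr hs hab, h b a hab, hs]

theorem stmt15_general (n : ℕ) (r s : ℂ) (hr : r ≠ 0) (hs : s ≠ 0) (hrs : r ≠ s) :
    LinearMap.ker (Rz n r s (r⁻¹ * s)).mulVecLin = Ssub n s := by
  rw [ker_Rz_inv_mul_eq_twistedSymm hr hs hrs, Ssub_eq_twistedSymm]

/-- The kernel of `R(r⁻¹ s)` on `V ⊗ V` equals `S²_{r,s}(V)`. -/
theorem stmt15 (n : ℕ) (hn : 2 ≤ n) (r s : ℂ) (hr : r ≠ 0) (hs : s ≠ 0) (hrs : r ≠ s) (hsr : s ≠ -r) :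
    LinearMap.ker (Rz n r s (r⁻¹ * s)).mulVecLin = Ssub n s :=
  stmt15_general n r s hr hs hrs
end
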